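/- Let p, q be nonnegative integers with p ≥ 1 and fix a nonnegative integer j. Then the sequence i ↦ A_{p,q}(i,j)/A_{p-1,q}(i,j) (a sequence of real numbers) is nonincreasing in i and converges to (p+q+j+1)/(p+q+1) as i → ∞. -/

import Mathlib

/-!
For fixed `j`, the generalized Eulerian numbers have the closed form
`A_{p,q}(i,j) = ∑_{m ≤ j} (-1)^m C(i+j+p+q+2, m) C(p+q+j-m+1, j-m) (j-m+q+1)^(i+j)`,
whose term `m = 0` dominates, so `A_{p,q}(i,j) ~ C(p+q+j+1, j) (j+q+1)^(i+j)` as `i → ∞`;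
the limit of the ratio is the quotient of these two binomial coefficients.
Monotonicity follows from a simultaneous induction on two cross inequalities between
`A = A_{p+1,q}` and `B = A_{p,q}`: the growth ratio of `A` in the `i` direction is at most
that of `B`, while in the `j` direction it is at least `(i+p+2)/(i+p+1)` times that of `B`.
-/

/-- The generalized Eulerian number `eulerA p q i j` counts the paths in the Euler graph
from `(p, q)` to `(p + i, q + j)`.  It is defined by the initial conditions
`eulerA p q i 0 = (q+1)^i`, `eulerA p q 0 j = (p+1)^j` and the recurrence
`eulerA p q i j = (j+q+1) * eulerA p q (i-1) j + (i+p+1) * eulerA p q i (j-1)`. -/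
def eulerA (p q : ℕ) : ℕ → ℕ → ℕ
  | i, 0 => (q + 1) ^ i
  | 0, j + 1 => (p + 1) ^ (j + 1)
  | i + 1, j + 1 =>
      (j + 1 + q + 1) * eulerA p q i (j + 1) + (i + 1 + p + 1) * eulerA p q (i + 1) j

open Finset Filter Topology
open PowerSeries (X coeff)

lemma eulerA_zero_right (p q i : ℕ) : eulerA p q i 0 = (q + 1) ^ i := by
  simp [eulerA]

lemma eulerA_zero_left (p q j : ℕ) : eulerA p q 0 j = (p + 1) ^ j := by
  cases j <;> simp [eulerA]

lemma eulerA_succ_succ (p q i j : ℕ) :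
    eulerA p q (i + 1) (j + 1) =
      (j + q + 2) * eulerA p q i (j + 1) + (i + p + 2) * eulerA p q (i + 1) j := by
  simp only [eulerA]; ring

lemma eulerA_pos (p q i j : ℕ) : 0 < eulerA p q i j := by
  induction j generalizing i with
  | zero => rw [eulerA_zero_right]; positivity
  | succ j ihj =>
    induction i with
    | zero => rw [eulerA_zero_left]; positivity
    | succ i ihi => rw [eulerA_succ_succ]; have := ihj (i + 1); positivity

def altConv (N : ℕ) (h : ℕ → ℤ) (j : ℕ) : ℤ :=
  ∑ m ∈ range (j + 1), (-1) ^ m * (N.choose m : ℤ) * h (j - m)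

lemma altConv_zero_right (N : ℕ) (h : ℕ → ℤ) : altConv N h 0 = h 0 := by
  simp [altConv]

lemma altConv_succ_succ (N : ℕ) (h : ℕ → ℤ) (j : ℕ) :
    altConv (N + 1) h (j + 1) = altConv N h (j + 1) - altConv N h j := by
  have hterm : ∀ m ∈ range (j + 1),
      (-1) ^ (m + 1) * ((N + 1).choose (m + 1) : ℤ) * h (j + 1 - (m + 1)) =
        (-1) ^ (m + 1) * (N.choose (m + 1) : ℤ) * h (j + 1 - (m + 1)) -
          (-1) ^ m * (N.choose m : ℤ) * h (j - m) := by
    intro m _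
    rw [Nat.add_sub_add_right, Nat.choose_succ_succ]
    push_cast
    ring
  simp only [altConv]
  rw [sum_range_succ', sum_range_succ' _ (j + 1), sum_congr rfl hterm, sum_sub_distrib]
  simp only [Nat.choose_zero_right]
  ring

lemma altConv_eq_coeff (N : ℕ) (h : ℕ → ℤ) (j : ℕ) :
    altConv N h j = coeff j ((1 - X) ^ N * PowerSeries.mk h) := by
  induction N generalizing j with
  | zero =>
    simp only [altConv, sum_range_succ', Nat.choose_zero_succ]
    simp
  | succ N ih =>
    cases j with
    | zero => simp [altConv_zero_right]
    | succ j =>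
      rw [altConv_succ_succ, ih, ih, pow_succ, mul_sub, mul_one, sub_mul, map_sub,
        mul_comm _ X, mul_assoc, PowerSeries.coeff_succ_X_mul]

lemma altConv_choose_eq_zero (B j : ℕ) :
    altConv (B + 1) (fun k => ((B + k).choose k : ℤ)) (j + 1) = 0 := by
  have hinv : (1 - X) ^ (B + 1) * PowerSeries.mk (fun k => ((B + k).choose k : ℤ)) = 1 := by
    simp_rw [← Nat.choose_symm_add]
    rw [mul_comm]
    exact PowerSeries.mk_add_choose_mul_one_sub_pow_eq_one ℤ B
  rw [altConv_eq_coeff, hinv, PowerSeries.coeff_one, if_neg j.succ_ne_zero]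

lemma altConv_mul_add (N : ℕ) (h : ℕ → ℤ) (c : ℤ) (j : ℕ) :
    altConv (N + 1) (fun k => (k + c) * h k) (j + 1) =
      (j + 1 + c) * altConv (N + 1) h (j + 1) + (N + 1) * altConv N h j := by
  set t : ℕ → ℤ := fun m => (-1) ^ m * ((N + 1).choose m : ℤ) * h (j + 1 - m)
  have hsplit : ∀ m ∈ range (j + 2),
      (-1) ^ m * ((N + 1).choose m : ℤ) * (((j + 1 - m : ℕ) : ℤ) + c) * h (j + 1 - m) =
        (j + 1 + c) * t m - m * t m := by
    intro m hm
    rw [Nat.cast_sub (by simpa [Nat.lt_succ_iff] using hm)]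
    push_cast
    ring
  have hweighted : ∑ m ∈ range (j + 2), (m : ℤ) * t m = -((N + 1) * altConv N h j) := by
    rw [sum_range_succ', altConv, mul_sum, ← sum_neg_distrib]
    simp only [t, Nat.cast_zero, zero_mul, add_zero]
    refine sum_congr rfl fun m _ => ?_
    have hchoose : ((m + 1 : ℕ) : ℤ) * ((N + 1).choose (m + 1) : ℤ) = (N + 1) * N.choose m := by
      rw [mul_comm]; exact_mod_cast (Nat.add_one_mul_choose_eq N m).symm
    rw [Nat.add_sub_add_right, pow_succ]
    linear_combination (-(-1) ^ m * h (j - m)) * hchoose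
  have hsum : altConv (N + 1) h (j + 1) = ∑ m ∈ range (j + 2), t m := rfl
  rw [hsum, altConv]
  simp only [← mul_assoc]
  rw [sum_congr rfl hsplit, sum_sub_distrib, ← mul_sum, hweighted]
  ring

def eulerWeight (p q e k : ℕ) : ℤ := ((p + q + k + 1).choose k : ℤ) * ((k : ℤ) + q + 1) ^ e

/- With `e = i + j`, `eulerA p q i j = eulerSum p q (i + j) j`. The recurrence of `eulerA`
holds for `eulerSum` at all `e, j`, and forces `eulerSum p q e j = 0` for `e < j`; this is what
produces the boundary values `(p + 1)^j` on the diagonal `e = j`. -/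
def eulerSum (p q e j : ℕ) : ℤ := altConv (e + p + q + 2) (eulerWeight p q e) j

section eulerSum

variable (p q : ℕ)

lemma eulerSum_zero_right (e : ℕ) : eulerSum p q e 0 = (q + 1) ^ e := by
  simp [eulerSum, altConv_zero_right, eulerWeight]

lemma eulerSum_succ_succ (e j : ℕ) :
    eulerSum p q (e + 1) (j + 1) =
      (j + q + 2) * eulerSum p q e (j + 1) + ((e : ℤ) - j + p + 1) * eulerSum p q e j := by
  have hweight : eulerWeight p q (e + 1) = fun k => (k + ((q : ℤ) + 1)) * eulerWeight p q e k := by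
    funext k; simp only [eulerWeight]; ring
  rw [eulerSum, hweight, show e + 1 + p + q + 2 = e + p + q + 2 + 1 by ring, altConv_mul_add,
    altConv_succ_succ, ← eulerSum, ← eulerSum]
  push_cast
  ring

lemma eulerSum_eq_zero_of_lt {e j : ℕ} (h : e < j) : eulerSum p q e j = 0 := by
  induction e generalizing j with
  | zero =>
    obtain ⟨j, rfl⟩ := Nat.exists_eq_add_of_lt h
    have hweight : eulerWeight p q 0 = fun k => ((p + q + 1 + k).choose k : ℤ) := by
      funext k; simp [eulerWeight, add_right_comm]
    rw [eulerSum, hweight, show 0 + p + q + 2 = p + q + 1 + 1 by ring]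
    exact altConv_choose_eq_zero _ _
  | succ e ih =>
    obtain ⟨j, rfl⟩ : ∃ j', j = j' + 1 := ⟨j - 1, by omega⟩
    rw [eulerSum_succ_succ, ih (by omega), ih (by omega)]
    ring

lemma eulerSum_self (j : ℕ) : eulerSum p q j j = (p + 1) ^ j := by
  induction j with
  | zero => simp [eulerSum_zero_right]
  | succ j ih =>
    rw [eulerSum_succ_succ, ih, eulerSum_eq_zero_of_lt p q (Nat.lt_succ_self j)]
    ring

end eulerSum

lemma eulerA_eq_eulerSum (p q i j : ℕ) : (eulerA p q i j : ℤ) = eulerSum p q (i + j) j := by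
  induction j generalizing i with
  | zero => simp [eulerA_zero_right, eulerSum_zero_right]
  | succ j ihj =>
    induction i with
    | zero => simp [eulerA_zero_left, eulerSum_self]
    | succ i ihi =>
      rw [eulerA_succ_succ, show i + 1 + (j + 1) = i + j + 1 + 1 by ring, eulerSum_succ_succ]
      push_cast
      rw [ihi, ihj, show i + (j + 1) = i + j + 1 by ring, show i + 1 + j = i + j + 1 by ring]
      ring

lemma tendsto_choose_add_mul_pow (K m : ℕ) {x : ℝ} (hx0 : 0 < x) (hx1 : x < 1) :
    Tendsto (fun n : ℕ => ((n + K).choose m : ℝ) * x ^ n) atTop (𝓝 0) := by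
  have hchoose : Tendsto (fun n : ℕ => (n.choose m : ℝ) * x ^ n) atTop (𝓝 0) :=
    squeeze_zero (fun n => by positivity)
      (fun n => mul_le_mul_of_nonneg_right (by exact_mod_cast n.choose_le_pow m) (by positivity))
      (tendsto_pow_const_mul_const_pow_of_lt_one m hx0.le hx1)
  have hshift := (hchoose.comp (tendsto_add_atTop_nat K)).div_const (x ^ K)
  rw [zero_div] at hshift
  refine hshift.congr fun n => ?_
  simp only [Function.comp, pow_add]
  field_simp

lemma tendsto_eulerA_div_pow (p q j : ℕ) :
    Tendsto (fun i => (eulerA p q i j : ℝ) / ((j : ℝ) + q + 1) ^ (i + j)) atTop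
      (𝓝 ((p + q + j + 1).choose j)) := by
  set b : ℝ := (j : ℝ) + q + 1 with hb_def
  have hb : 0 < b := by positivity
  let term : ℕ → ℕ → ℝ := fun m i => (-1) ^ m * ((p + q + (j - m) + 1).choose (j - m) : ℝ) *
    (((i + j + p + q + 2).choose m : ℝ) * (((j - m : ℕ) + q + 1 : ℝ) / b) ^ (i + j))
  have hclosed : ∀ i, (eulerA p q i j : ℝ) / b ^ (i + j) = ∑ m ∈ range (j + 1), term m i := by
    intro i
    have h := congrArg (Int.cast : ℤ → ℝ) (eulerA_eq_eulerSum p q i j)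
    push_cast at h
    simp only [h, eulerSum, altConv, eulerWeight, term, div_pow]
    push_cast
    rw [sum_div]
    refine sum_congr rfl fun m _ => ?_
    ring
  have hlead : ∀ i, term 0 i = (p + q + j + 1).choose j := by
    intro i
    simp [term, ← hb_def, div_self hb.ne']
  have hrest : ∀ m ∈ range j, Tendsto (term (m + 1)) atTop (𝓝 0) := by
    intro m hm
    have hx0 : 0 < ((j - (m + 1) : ℕ) + q + 1 : ℝ) / b := by positivity
    have hx1 : ((j - (m + 1) : ℕ) + q + 1 : ℝ) / b < 1 := by
      rw [div_lt_one hb, Nat.cast_sub (by simpa using hm)]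
      push_cast
      linarith
    have hlim := ((tendsto_choose_add_mul_pow (p + q + 2) (m + 1) hx0 hx1).comp
      (tendsto_add_atTop_nat j)).const_mul ((-1) ^ (m + 1) *
        ((p + q + (j - (m + 1)) + 1).choose (j - (m + 1)) : ℝ))
    rw [mul_zero] at hlim
    refine hlim.congr fun i => ?_
    simp only [Function.comp, term, ← add_assoc]
  simp_rw [hclosed, sum_range_succ', hlead]
  simpa using (tendsto_finsetSum _ hrest).add_const ((p + q + j + 1).choose j : ℝ)

lemma tendsto_eulerA_succ_div (p q j : ℕ) :
    Tendsto (fun i => (eulerA (p + 1) q i j : ℝ) / eulerA p q i j) atTop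
      (𝓝 (((p : ℝ) + q + j + 2) / (p + q + 2))) := by
  have hC : ((p + q + j + 1).choose j : ℝ) ≠ 0 := by
    exact_mod_cast (Nat.choose_pos (by omega)).ne'
  have hratio : ((p + 1 + q + j + 1).choose j : ℝ) / (p + q + j + 1).choose j =
      ((p : ℝ) + q + j + 2) / (p + q + 2) := by
    have h := Nat.choose_mul_succ_eq (p + q + j + 1) j
    rw [show p + q + j + 1 + 1 - j = p + q + 2 by omega,
      show p + q + j + 1 + 1 = p + 1 + q + j + 1 by ring] at h
    have h' := congrArg (Nat.cast : ℕ → ℝ) h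
    push_cast at h'
    rw [div_eq_div_iff hC (by positivity)]
    linear_combination -h'
  have hlim := (tendsto_eulerA_div_pow (p + 1) q j).div (tendsto_eulerA_div_pow p q j) hC
  rw [hratio] at hlim
  refine hlim.congr fun i => ?_
  exact div_div_div_cancel_right₀ (by positivity) _ _

section Antitone

variable (p q : ℕ)

lemma eulerA_cross_diag {i j : ℕ}
    (hM : eulerA (p + 1) q (i + 1) j * eulerA p q i j ≤ eulerA (p + 1) q i j * eulerA p q (i + 1) j)
    (hD : (i + p + 2) * eulerA (p + 1) q i j * eulerA p q i (j + 1) ≤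
      (i + p + 1) * eulerA (p + 1) q i (j + 1) * eulerA p q i j) :
    (i + p + 2) * eulerA (p + 1) q (i + 1) j * eulerA p q i (j + 1) ≤
      (i + p + 1) * eulerA (p + 1) q i (j + 1) * eulerA p q (i + 1) j := by
  have hpos : 0 < eulerA (p + 1) q i j * eulerA p q i j :=
    Nat.mul_pos (eulerA_pos _ _ _ _) (eulerA_pos _ _ _ _)
  refine Nat.le_of_mul_le_mul_right ?_ hpos
  calc (i + p + 2) * eulerA (p + 1) q (i + 1) j * eulerA p q i (j + 1) *
        (eulerA (p + 1) q i j * eulerA p q i j)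
      = eulerA (p + 1) q (i + 1) j * eulerA p q i j *
        ((i + p + 2) * eulerA (p + 1) q i j * eulerA p q i (j + 1)) := by ring
    _ ≤ eulerA (p + 1) q i j * eulerA p q (i + 1) j *
        ((i + p + 1) * eulerA (p + 1) q i (j + 1) * eulerA p q i j) := Nat.mul_le_mul hM hD
    _ = (i + p + 1) * eulerA (p + 1) q i (j + 1) * eulerA p q (i + 1) j *
        (eulerA (p + 1) q i j * eulerA p q i j) := by ring

lemma eulerA_cross_left_succ {i j : ℕ}
    (hM : eulerA (p + 1) q (i + 1) j * eulerA p q i j ≤ eulerA (p + 1) q i j * eulerA p q (i + 1) j)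
    (hD : (i + p + 2) * eulerA (p + 1) q i j * eulerA p q i (j + 1) ≤
      (i + p + 1) * eulerA (p + 1) q i (j + 1) * eulerA p q i j) :
    eulerA (p + 1) q (i + 1) (j + 1) * eulerA p q i (j + 1) ≤
      eulerA (p + 1) q i (j + 1) * eulerA p q (i + 1) (j + 1) := by
  have hG := eulerA_cross_diag p q hM hD
  rw [eulerA_succ_succ, eulerA_succ_succ]
  nlinarith [hG]

lemma eulerA_cross_right_succ {i j : ℕ}
    (hG : (i + p + 2) * eulerA (p + 1) q (i + 1) j * eulerA p q i (j + 1) ≤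
      (i + p + 1) * eulerA (p + 1) q i (j + 1) * eulerA p q (i + 1) j) :
    (i + 1 + p + 2) * eulerA (p + 1) q (i + 1) j * eulerA p q (i + 1) (j + 1) ≤
      (i + 1 + p + 1) * eulerA (p + 1) q (i + 1) (j + 1) * eulerA p q (i + 1) j := by
  have hF : (i + p + 3) * eulerA (p + 1) q (i + 1) j * eulerA p q i (j + 1) ≤
      (i + p + 2) * eulerA (p + 1) q i (j + 1) * eulerA p q (i + 1) j := by
    refine Nat.le_of_mul_le_mul_left ?_ (by omega : 0 < i + p + 2)
    nlinarith [hG]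
  rw [eulerA_succ_succ, eulerA_succ_succ]
  nlinarith [hF]

lemma eulerA_cross_left_of_right {i : ℕ}
    (hD : ∀ j, (i + p + 2) * eulerA (p + 1) q i j * eulerA p q i (j + 1) ≤
      (i + p + 1) * eulerA (p + 1) q i (j + 1) * eulerA p q i j) (j : ℕ) :
    eulerA (p + 1) q (i + 1) j * eulerA p q i j ≤ eulerA (p + 1) q i j * eulerA p q (i + 1) j := by
  induction j with
  | zero => simp only [eulerA_zero_right]; exact le_of_eq (by ring)
  | succ j ih => exact eulerA_cross_left_succ p q ih (hD j)

lemma eulerA_cross_right (i j : ℕ) :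
    (i + p + 2) * eulerA (p + 1) q i j * eulerA p q i (j + 1) ≤
      (i + p + 1) * eulerA (p + 1) q i (j + 1) * eulerA p q i j := by
  induction i generalizing j with
  | zero => simp only [eulerA_zero_left]; exact le_of_eq (by ring)
  | succ i ih =>
    exact eulerA_cross_right_succ p q
      (eulerA_cross_diag p q (eulerA_cross_left_of_right p q ih j) (ih j))

lemma eulerA_cross_left (i j : ℕ) :
    eulerA (p + 1) q (i + 1) j * eulerA p q i j ≤ eulerA (p + 1) q i j * eulerA p q (i + 1) j :=
  eulerA_cross_left_of_right p q (eulerA_cross_right p q i) j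

end Antitone

lemma antitone_eulerA_succ_div (p q j : ℕ) :
    Antitone (fun i => (eulerA (p + 1) q i j : ℝ) / eulerA p q i j) := by
  refine antitone_nat_of_succ_le fun i => ?_
  rw [div_le_div_iff₀ (by exact_mod_cast eulerA_pos _ _ _ _) (by exact_mod_cast eulerA_pos _ _ _ _)]
  exact_mod_cast eulerA_cross_left p q i j

theorem stmt8 (p q j : ℕ) (hp : 1 ≤ p) :
    Antitone (fun i : ℕ => (eulerA p q i j : ℝ) / (eulerA (p - 1) q i j)) ∧
      Filter.Tendsto (fun i : ℕ => (eulerA p q i j : ℝ) / (eulerA (p - 1) q i j))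
        Filter.atTop (nhds (((p : ℝ) + q + j + 1) / ((p : ℝ) + q + 1))) := by
  obtain ⟨p, rfl⟩ := Nat.exists_eq_add_of_le' hp
  rw [Nat.add_sub_cancel]
  refine ⟨antitone_eulerA_succ_div p q j, ?_⟩
  convert tendsto_eulerA_succ_div p q j using 3 <;> push_cast <;> ring
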